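/- Let p be a full-support prior on {x_1,…,x_N}, let ε ≥ 0, and let μ : [0,∞)^N → [0,∞) be sublinear and permutation-symmetric. Let V = {λ ∈ ℝ^N : 0 ≤ λ_i ≤ e^ε for all i, and ∑_{i=1}^N p_i·λ_i = 1}, and let V* be the (finite) set of extreme points of the polytope V. Then the supremum of the sub-convex utility U over M_N(ε) equals the maximum, over all weight assignments w : V* → [0,∞) satisfying ∑_{λ∈V*} w(λ) = 1 and ∑_{λ∈V*} w(λ)·λ_i = 1 for every i ∈ {1,…,N}, of the linear objective ∑_{λ∈V*} w(λ)·μ(λ). -/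

import Mathlib

open scoped BigOperators Classical

noncomputable section

/-- The output distribution `P_Y(j) = ∑ i, p i * P i j` induced by a prior `p`
and a mechanism `P`. -/
def outDist {N M : ℕ} (p : Fin N → ℝ) (P : Matrix (Fin N) (Fin M) ℝ) (j : Fin M) : ℝ :=
  ∑ i, p i * P i j

/-- A privacy mechanism: nonnegative entries, rows summing to one. -/
def IsMechanism {N M : ℕ} (P : Matrix (Fin N) (Fin M) ℝ) : Prop :=
  (∀ i j, 0 ≤ P i j) ∧ ∀ i, ∑ j, P i j = 1

/-- Pointwise maximal leakage to output `j`: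
`ℓ(X → y_j) = log((max_i P i j) / P_Y(j))`. -/
def pml {N M : ℕ} (p : Fin N → ℝ) (P : Matrix (Fin N) (Fin M) ℝ) (j : Fin M) : ℝ :=
  Real.log ((⨆ i, P i j) / outDist p P j)

/-- `P` satisfies `ε`-PML (w.r.t. prior `p`): the leakage of every output of
positive probability is at most `ε`. -/
def SatisfiesPML {N M : ℕ} (p : Fin N → ℝ) (ε : ℝ) (P : Matrix (Fin N) (Fin M) ℝ) : Prop :=
  ∀ j, 0 < outDist p P j → pml p P j ≤ ε

/-- A sublinear function `μ : [0,∞)^N → [0,∞)`: nonnegative, positively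
homogeneous and subadditive on the nonnegative orthant. -/
def Sublinear {N : ℕ} (μ : (Fin N → ℝ) → ℝ) : Prop :=
  (∀ x, (∀ i, 0 ≤ x i) → 0 ≤ μ x) ∧
  (∀ (c : ℝ), 0 ≤ c → ∀ x, (∀ i, 0 ≤ x i) → μ (c • x) = c * μ x) ∧
  (∀ x y, (∀ i, 0 ≤ x i) → (∀ i, 0 ≤ y i) → μ (x + y) ≤ μ x + μ y)

/-- The sub-convex utility associated with `μ`: `U(P) = ∑ j, μ(P_j)` where
`P_j` is the `j`-th column of `P`. -/
def utility {N M : ℕ} (μ : (Fin N → ℝ) → ℝ) (P : Matrix (Fin N) (Fin M) ℝ) : ℝ :=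
  ∑ j, μ (fun i => P i j)

end

/-- `μ` is permutation-symmetric. -/
def PermSymmetric {N : ℕ} (μ : (Fin N → ℝ) → ℝ) : Prop :=
  ∀ σ : Equiv.Perm (Fin N), ∀ x : Fin N → ℝ, μ (x ∘ σ) = μ x

/-- The polytope of feasible lift vectors for privacy level `ε` and prior `p`. -/
def liftPolytope (N : ℕ) (p : Fin N → ℝ) (ε : ℝ) : Set (Fin N → ℝ) :=
  {lam | (∀ i, 0 ≤ lam i ∧ lam i ≤ Real.exp ε) ∧ ∑ i, p i * lam i = 1}

/-!
Every column of an `ε`-PML mechanism is `P_Y(j)` times a lift vector in the polytope `V`, and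
conversely any family of nonnegatively weighted lift vectors summing to the all-ones vector is the
column family of an `ε`-PML mechanism. A lift vector with two coordinates strictly inside
`(0, e^ε)` can be perturbed along the hyperplane `∑ p_i λ_i = 1` in both directions, so the
extreme points of `V` have at most one such coordinate; hence they are finitely many and, by
Krein–Milman, `V` is their convex hull. Sublinearity of `μ` then bounds the utility of any
mechanism by the linear objective of the induced weights on extreme points. Conversely, an
optimal weighting (which exists by compactness) can be moved to a basic one, supported on at most
`N` extreme points, without lowering the objective; its `N` weighted extreme points are the
columns of an optimal mechanism.
-/

open Finset Function Matrix Real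

namespace Sublinear

variable {N : ℕ} {μ : (Fin N → ℝ) → ℝ}

theorem map_zero (hμ : Sublinear μ) : μ 0 = 0 := by
  simpa using hμ.2.1 0 le_rfl 0 fun _ => le_rfl

theorem map_sum_smul_le (hμ : Sublinear μ) {ι : Type*} (s : Finset ι) {a : ι → ℝ}
    {g : ι → Fin N → ℝ} (ha : ∀ k ∈ s, 0 ≤ a k) (hg : ∀ k ∈ s, 0 ≤ g k) :
    μ (∑ k ∈ s, a k • g k) ≤ ∑ k ∈ s, a k * μ (g k) := by
  classical
  induction s using Finset.induction_on with
  | empty => simp [hμ.map_zero]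
  | insert k s hk ih =>
    rw [sum_insert hk, sum_insert hk]
    have hak := ha k (mem_insert_self k s)
    have hgk := hg k (mem_insert_self k s)
    have hs : ∀ l ∈ s, 0 ≤ a l • g l := fun l hl =>
      smul_nonneg (ha l (mem_insert_of_mem hl)) (hg l (mem_insert_of_mem hl))
    calc μ (a k • g k + ∑ l ∈ s, a l • g l)
        ≤ μ (a k • g k) + μ (∑ l ∈ s, a l • g l) :=
          hμ.2.2 _ _ (smul_nonneg hak hgk) (sum_nonneg hs)
      _ ≤ a k * μ (g k) + ∑ l ∈ s, a l * μ (g l) :=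
          add_le_add (hμ.2.1 _ hak _ hgk).le
            (ih (fun l hl => ha l (mem_insert_of_mem hl)) fun l hl => hg l (mem_insert_of_mem hl))

end Sublinear

theorem IsGreatest.of_forall_exists_le {α : Type*} [PartialOrder α] {A B : Set α} {a : α}
    (ha : IsGreatest A a) (hBA : ∀ b ∈ B, ∃ a' ∈ A, b ≤ a') (hAB : ∀ a' ∈ A, ∃ b ∈ B, a' ≤ b) :
    IsGreatest B a := by
  obtain ⟨b, hb, hab⟩ := hAB a ha.1
  have hub : a ∈ upperBounds B := fun b' hb' =>
    let ⟨a', ha', hba'⟩ := hBA b' hb'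
    hba'.trans (ha.2 ha')
  exact ⟨hab.antisymm (hub hb) ▸ hb, hub⟩

section ConicWeights

variable {E : Type*} [AddCommGroup E] [Module ℝ E]

def conicWeights (S : Finset E) (b : E) : Set (E → ℝ) :=
  {w | (∀ x, 0 ≤ w x) ∧ (∀ x ∉ S, w x = 0) ∧ ∑ x ∈ S, w x • x = b}

variable {S : Finset E} {b : E} {w : E → ℝ}

theorem sum_eq_of_mem_conicWeights (φ : E →ₗ[ℝ] ℝ) (hφ : ∀ x ∈ S, φ x = 1)
    (hw : w ∈ conicWeights S b) : ∑ x ∈ S, w x = φ b := by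
  rw [← hw.2.2, map_sum]
  exact sum_congr rfl fun x hx => by rw [map_smul, hφ x hx, smul_eq_mul, mul_one]

theorem exists_mem_conicWeights_of_mem_convexHull {y : E} (hy : y ∈ convexHull ℝ (S : Set E)) :
    (conicWeights S y).Nonempty := by
  obtain ⟨w, hw0, -, hwy⟩ := Finset.mem_convexHull'.1 hy
  refine ⟨fun x => if x ∈ S then w x else 0, fun x => ?_, fun x hx => if_neg hx, ?_⟩
  · by_cases hx : x ∈ S <;> simp [hx, hw0]
  · rw [← hwy]
    exact sum_congr rfl fun x hx => by simp [hx]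

theorem exists_relation_of_finrank_lt_card [FiniteDimensional ℝ E]
    (hS : Module.finrank ℝ E < S.card) :
    ∃ c : E → ℝ, ∑ x ∈ S, c x • x = 0 ∧ (∀ x ∉ S, c x = 0) ∧ ∃ x ∈ S, c x ≠ 0 := by
  obtain ⟨c, hc, x, hx, hcx⟩ := Module.exists_nontrivial_relation_of_finrank_lt_card hS
  refine ⟨fun y => if y ∈ S then c y else 0, ?_, fun y hy => if_neg hy, x, hx, by simpa [hx]⟩
  rw [← hc]
  exact sum_congr rfl fun y hy => by simp [hy]

theorem exists_neg_of_sum_smul_eq_zero (φ : E →ₗ[ℝ] ℝ) (hφ : ∀ x ∈ S, 0 < φ x) {c : E → ℝ}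
    (hc : ∑ x ∈ S, c x • x = 0) (hne : ∃ x ∈ S, c x ≠ 0) : ∃ x ∈ S, c x < 0 := by
  by_contra! hnonneg
  obtain ⟨x, hx, hcx⟩ := hne
  have h0 : ∑ y ∈ S, c y * φ y = 0 := by simpa [map_sum] using congrArg φ hc
  have hterm := (sum_eq_zero_iff_of_nonneg fun y hy =>
    mul_nonneg (hnonneg y hy) (hφ y hy).le).1 h0 x hx
  exact hcx ((mul_eq_zero.1 hterm).resolve_right (hφ x hx).ne')

/-- The ratio test of the simplex method: move along the relation `c` until the first weight
vanishes. -/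
theorem exists_mem_conicWeights_erase {f c : E → ℝ} (hw : w ∈ conicWeights S b)
    (hc : ∑ x ∈ S, c x • x = 0) (hcS : ∀ x ∉ S, c x = 0) (hneg : ∃ x ∈ S, c x < 0)
    (hcf : 0 ≤ ∑ x ∈ S, c x * f x) :
    ∃ x₀ ∈ S, ∃ w' ∈ conicWeights (S.erase x₀) b,
      ∑ x ∈ S, w x * f x ≤ ∑ x ∈ S.erase x₀, w' x * f x := by
  obtain ⟨x₀, hx₀R, hmin⟩ := (S.filter (c · < 0)).exists_min_image (fun x => w x / -c x)
    (let ⟨x, hx, hcx⟩ := hneg; ⟨x, mem_filter.2 ⟨hx, hcx⟩⟩)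
  obtain ⟨hx₀, hcx₀⟩ := mem_filter.1 hx₀R
  set τ := w x₀ / -c x₀
  have hτ : 0 ≤ τ := div_nonneg (hw.1 x₀) (neg_nonneg.2 hcx₀.le)
  have hx₀zero : (w + τ • c) x₀ = 0 := by
    simp only [Pi.add_apply, Pi.smul_apply, smul_eq_mul, τ]
    field_simp [hcx₀.ne]
    ring
  refine ⟨x₀, hx₀, w + τ • c, ⟨fun x => ?_, fun x hx => ?_, ?_⟩, ?_⟩
  · simp only [Pi.add_apply, Pi.smul_apply, smul_eq_mul]
    by_cases hcx : c x < 0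
    · have hxS : x ∈ S := by_contra fun hxS => hcx.ne (hcS x hxS)
      have hτx := (le_div_iff₀ (neg_pos.2 hcx)).1 (hmin x (mem_filter.2 ⟨hxS, hcx⟩))
      rw [mul_neg] at hτx
      linarith
    · exact add_nonneg (hw.1 x) (mul_nonneg hτ (not_lt.1 hcx))
  · rcases eq_or_ne x x₀ with rfl | hxx₀
    · exact hx₀zero
    · have hxS : x ∉ S := fun hxS => hx (mem_erase.2 ⟨hxx₀, hxS⟩)
      simp [hw.2.1 x hxS, hcS x hxS]
  · rw [sum_erase S (by rw [hx₀zero, zero_smul])]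
    simp only [Pi.add_apply, Pi.smul_apply, smul_eq_mul, add_smul, sum_add_distrib, mul_smul,
      ← smul_sum, hc, hw.2.2, smul_zero, add_zero]
  · rw [sum_erase S (by rw [hx₀zero, zero_mul])]
    simp only [Pi.add_apply, Pi.smul_apply, smul_eq_mul, add_mul, sum_add_distrib, mul_assoc,
      ← mul_sum]
    exact le_add_of_nonneg_right (mul_nonneg hτ hcf)

theorem exists_conicWeights_card_le_finrank [FiniteDimensional ℝ E] (φ : E →ₗ[ℝ] ℝ)
    (f : E → ℝ) (S : Finset E) (hφ : ∀ x ∈ S, 0 < φ x) (hw : w ∈ conicWeights S b) :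
    ∃ T ⊆ S, T.card ≤ Module.finrank ℝ E ∧ ∃ w' ∈ conicWeights T b,
      ∑ x ∈ S, w x * f x ≤ ∑ x ∈ T, w' x * f x := by
  induction S using Finset.strongInduction generalizing w with
  | H S ih =>
    by_cases hS : S.card ≤ Module.finrank ℝ E
    · exact ⟨S, subset_rfl, hS, w, hw, le_rfl⟩
    obtain ⟨c, hc, hcS, hne⟩ := exists_relation_of_finrank_lt_card (not_le.1 hS)
    obtain ⟨x₀, hx₀, w', hw', hle⟩ : ∃ x₀ ∈ S, ∃ w' ∈ conicWeights (S.erase x₀) b,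
        ∑ x ∈ S, w x * f x ≤ ∑ x ∈ S.erase x₀, w' x * f x := by
      rcases le_total 0 (∑ x ∈ S, c x * f x) with hcf | hcf
      · exact exists_mem_conicWeights_erase hw hc hcS
          (exists_neg_of_sum_smul_eq_zero φ hφ hc hne) hcf
      · refine exists_mem_conicWeights_erase (c := -c) hw (by simp [neg_smul, hc])
          (fun x hx => by simp [hcS x hx]) (exists_neg_of_sum_smul_eq_zero φ hφ
            (by simp [neg_smul, hc]) (by simpa using hne)) (by simpa using hcf)
    obtain ⟨T, hTS, hT, w'', hw'', hle'⟩ :=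
      ih (S.erase x₀) (erase_ssubset hx₀) (fun x hx => hφ x (mem_of_mem_erase hx)) hw'
    exact ⟨T, hTS.trans (erase_subset x₀ S), hT, w'', hw'', hle.trans hle'⟩

end ConicWeights

section Compactness

variable {E : Type*} [NormedAddCommGroup E] [NormedSpace ℝ E] {S : Finset E} {b : E}

theorem isCompact_conicWeights (φ : E →ₗ[ℝ] ℝ) (hφ : ∀ x ∈ S, φ x = 1) :
    IsCompact (conicWeights S b) := by
  have hsub : conicWeights S b ⊆ Set.univ.pi fun _ => Set.Icc 0 (φ b) := by
    intro w hw x _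
    refine ⟨hw.1 x, ?_⟩
    rw [← sum_eq_of_mem_conicWeights φ hφ hw]
    by_cases hx : x ∈ S
    · exact single_le_sum (fun y _ => hw.1 y) hx
    · exact (hw.2.1 x hx).trans_le (sum_nonneg fun y _ => hw.1 y)
  refine (isCompact_univ_pi fun _ => isCompact_Icc).of_isClosed_subset ?_ hsub
  simp only [conicWeights, Set.ofPred_and, Set.ofPred_forall]
  exact (isClosed_iInter fun x => isClosed_le continuous_const (continuous_apply x)).inter
    ((isClosed_iInter fun x => isClosed_iInter fun _ =>
      isClosed_eq (continuous_apply x) continuous_const).inter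
    (isClosed_eq (continuous_finsetSum _ fun x _ => (continuous_apply x).smul continuous_const)
      continuous_const))

theorem exists_isGreatest_image_conicWeights (φ : E →ₗ[ℝ] ℝ) (hφ : ∀ x ∈ S, φ x = 1)
    (f : E → ℝ) (hne : (conicWeights S b).Nonempty) :
    ∃ u, IsGreatest ((fun w => ∑ x ∈ S, w x * f x) '' conicWeights S b) u :=
  ((isCompact_conicWeights φ hφ).image
    (continuous_finsetSum _ fun x _ => (continuous_apply x).mul continuous_const)).exists_isGreatest
    (hne.image _)

end Compactness

section LiftPolytope

variable {N : ℕ} {p : Fin N → ℝ} {ε : ℝ}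

theorem liftPolytope_eq :
    liftPolytope N p ε = Set.Icc 0 (fun _ => exp ε) ∩ {x | dotProductBilin ℝ ℝ p x = 1} := by
  ext x
  simp [liftPolytope, Pi.le_def, forall_and, dotProduct]

theorem convex_liftPolytope : Convex ℝ (liftPolytope N p ε) := by
  rw [liftPolytope_eq]
  exact (convex_Icc _ _).inter (convex_hyperplane (LinearMap.isLinear _) 1)

theorem isCompact_liftPolytope : IsCompact (liftPolytope N p ε) := by
  rw [liftPolytope_eq]
  exact isCompact_Icc.inter_right
    (isClosed_eq (LinearMap.continuous_of_finiteDimensional _) continuous_const)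

theorem one_mem_liftPolytope (hpsum : ∑ i, p i = 1) (hε : 0 ≤ ε) :
    (1 : Fin N → ℝ) ∈ liftPolytope N p ε :=
  ⟨fun _ => ⟨zero_le_one, one_le_exp hε⟩, by simpa using hpsum⟩

theorem apply_eq_of_mem_liftPolytope_of_forall_ne (hp : ∀ i, 0 < p i) {x y : Fin N → ℝ}
    (hx : x ∈ liftPolytope N p ε) (hy : y ∈ liftPolytope N p ε) {k : Fin N}
    (h : ∀ m ≠ k, x m = y m) : x k = y k := by
  have hsum : ∑ m, p m * (x m - y m) = 0 := by
    simp [mul_sub, sum_sub_distrib, hx.2, hy.2]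
  rw [sum_eq_single k (fun m _ hm => by rw [h m hm, sub_self, mul_zero]) (by simp)] at hsum
  exact sub_eq_zero.1 ((mul_eq_zero.1 hsum).resolve_left (hp k).ne')

theorem exists_add_smul_mem_liftPolytope {x d : Fin N → ℝ} (hx : x ∈ liftPolytope N p ε)
    (hd : ∑ k, p k * d k = 0) (hfree : ∀ k, d k = 0 ∨ x k ∈ Set.Ioo 0 (exp ε)) :
    ∃ t : ℝ, 0 < t ∧ x + t • d ∈ liftPolytope N p ε ∧ x - t • d ∈ liftPolytope N p ε := by
  have hcoord : ∀ k, ∀ᶠ t in nhds (0 : ℝ), x k + t * d k ∈ Set.Icc 0 (exp ε) := by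
    intro k
    rcases hfree k with h | h
    · exact Filter.Eventually.of_forall fun t => by simpa [h] using hx.1 k
    · have hcont : Continuous fun t : ℝ => x k + t * d k := by fun_prop
      exact ((hcont.tendsto' 0 (x k) (by simp)).eventually (isOpen_Ioo.mem_nhds h)).mono
        fun t ht => Set.Ioo_subset_Icc_self ht
  have hmem : ∀ᶠ t in nhds (0 : ℝ), x + t • d ∈ liftPolytope N p ε := by
    filter_upwards [Filter.eventually_all.2 hcoord] with t ht
    refine ⟨ht, ?_⟩
    simp only [Pi.add_apply, Pi.smul_apply, smul_eq_mul, mul_add, sum_add_distrib, hx.2,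
      mul_left_comm _ t, ← mul_sum, hd, mul_zero, add_zero]
  obtain ⟨δ, hδ, hball⟩ := Metric.eventually_nhds_iff.1 hmem
  refine ⟨δ / 2, by positivity, hball ?_, ?_⟩
  · rw [Real.dist_0_eq_abs, abs_of_pos (by positivity)]
    linarith
  · rw [sub_eq_add_neg, ← neg_smul]
    refine hball ?_
    rw [Real.dist_0_eq_abs, abs_neg, abs_of_pos (by positivity)]
    linarith

theorem subsingleton_of_mem_extremePoints_liftPolytope (hp : ∀ i, 0 < p i) {x : Fin N → ℝ}
    (hx : x ∈ (liftPolytope N p ε).extremePoints ℝ) :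
    {i | x i ∈ Set.Ioo 0 (exp ε)}.Subsingleton := by
  intro i hi j hj
  by_contra hij
  set d : Fin N → ℝ := Pi.single i (p i)⁻¹ - Pi.single j (p j)⁻¹
  have hd : ∑ k, p k * d k = 0 := by
    simp [d, mul_sub, sum_sub_distrib, Pi.single_apply, (hp i).ne', (hp j).ne']
  have hfree : ∀ k, d k = 0 ∨ x k ∈ Set.Ioo 0 (exp ε) := by
    intro k
    by_cases hki : k = i
    · exact .inr (hki ▸ hi)
    by_cases hkj : k = j
    · exact .inr (hkj ▸ hj)
    · exact .inl (by simp [d, hki, hkj])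
  obtain ⟨t, ht, hplus, hminus⟩ := exists_add_smul_mem_liftPolytope hx.1 hd hfree
  have hseg : x ∈ openSegment ℝ (x - t • d) (x + t • d) :=
    ⟨1 / 2, 1 / 2, by norm_num, by norm_num, by norm_num, by module⟩
  have hdi : d i ≠ 0 := by simp [d, hij, (hp i).ne']
  have := congrFun (hx.2 hminus hplus hseg) i
  simp [ht.ne', hdi] at this

/-- An extreme point is determined by its zero set and its `e^ε` set: the at most one remaining
coordinate is then fixed by `∑ p_i λ_i = 1`. -/
theorem finite_extremePoints_liftPolytope (hp : ∀ i, 0 < p i) :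
    ((liftPolytope N p ε).extremePoints ℝ).Finite := by
  refine Set.Finite.of_finite_image (f := fun x => (x ⁻¹' {0}, x ⁻¹' {exp ε}))
    (Set.toFinite _) ?_
  intro x hx y hy hxy
  simp only [Prod.mk.injEq] at hxy
  obtain ⟨h0, he⟩ := hxy
  have hfix : ∀ m, x m ∉ Set.Ioo 0 (exp ε) → x m = y m := by
    intro m hm
    rcases (hx.1.1 m).1.eq_or_lt with hxm | hxm
    · have : m ∈ y ⁻¹' {0} := h0 ▸ hxm.symm
      exact hxm.symm.trans this.symm
    · have hxm' : x m = exp ε := (hx.1.1 m).2.eq_of_not_lt fun h => hm ⟨hxm, h⟩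
      have : m ∈ y ⁻¹' {exp ε} := he ▸ hxm'
      exact hxm'.trans this.symm
  funext k
  by_cases hk : x k ∈ Set.Ioo 0 (exp ε)
  · exact apply_eq_of_mem_liftPolytope_of_forall_ne hp hx.1 hy.1 fun m hm => hfix m fun hm' =>
      hm (subsingleton_of_mem_extremePoints_liftPolytope hp hx hm' hk)
  · exact hfix k hk

theorem convexHull_extremePoints_liftPolytope (hp : ∀ i, 0 < p i) :
    convexHull ℝ ((liftPolytope N p ε).extremePoints ℝ) = liftPolytope N p ε := by
  rw [← ((finite_extremePoints_liftPolytope hp).isClosed_convexHull (𝕜 := ℝ)).closure_eq]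
  exact closure_convexHull_extremePoints isCompact_liftPolytope convex_liftPolytope

end LiftPolytope

section Mechanism

variable {N M : ℕ} {p : Fin N → ℝ} {ε : ℝ} {P : Matrix (Fin N) (Fin M) ℝ}

theorem outDist_nonneg (hp : ∀ i, 0 < p i) (hP : ∀ i j, 0 ≤ P i j) (j : Fin M) :
    0 ≤ outDist p P j :=
  sum_nonneg fun i _ => mul_nonneg (hp i).le (hP i j)

theorem eq_zero_of_outDist_eq_zero (hp : ∀ i, 0 < p i) (hP : ∀ i j, 0 ≤ P i j) {j : Fin M}
    (h : outDist p P j = 0) (i : Fin N) : P i j = 0 :=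
  (mul_eq_zero.1 ((sum_eq_zero_iff_of_nonneg fun i _ => mul_nonneg (hp i).le (hP i j)).1 h i
    (mem_univ i))).resolve_left (hp i).ne'

theorem satisfiesPML_iff (hp : ∀ i, 0 < p i) (hP : ∀ i j, 0 ≤ P i j) :
    SatisfiesPML p ε P ↔ ∀ i j, P i j ≤ exp ε * outDist p P j := by
  have key : ∀ j, 0 < outDist p P j →
      (pml p P j ≤ ε ↔ ∀ i, P i j ≤ exp ε * outDist p P j) := by
    intro j hq
    obtain ⟨i₀, -, hi₀⟩ := exists_ne_zero_of_sum_ne_zero hq.ne'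
    have : Nonempty (Fin N) := ⟨i₀⟩
    have hbdd : BddAbove (Set.range fun i => P i j) := (Set.finite_range _).bddAbove
    have hsup : 0 < ⨆ i, P i j :=
      ((hP i₀ j).lt_of_ne (right_ne_zero_of_mul hi₀).symm).trans_le (le_ciSup hbdd i₀)
    rw [pml, log_le_iff_le_exp (div_pos hsup hq), div_le_iff₀ hq, mul_comm, ciSup_le_iff hbdd]
  constructor
  · intro h i j
    rcases (outDist_nonneg hp hP j).eq_or_lt with h0 | hq
    · rw [← h0, mul_zero, eq_zero_of_outDist_eq_zero hp hP h0.symm]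
    · exact (key j hq).1 (h j hq) i
  · exact fun h j hq => (key j hq).2 fun i => h i j

theorem exists_column_eq_smul (hp : ∀ i, 0 < p i) (hpsum : ∑ i, p i = 1) (hε : 0 ≤ ε)
    (hP : IsMechanism P) (hpml : SatisfiesPML p ε P) (j : Fin M) :
    ∃ x ∈ liftPolytope N p ε, (fun i => P i j) = outDist p P j • x := by
  rcases (outDist_nonneg hp hP.1 j).eq_or_lt with h0 | hq
  · refine ⟨1, one_mem_liftPolytope hpsum hε, funext fun i => ?_⟩
    simp [← h0, eq_zero_of_outDist_eq_zero hp hP.1 h0.symm i]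
  refine ⟨(outDist p P j)⁻¹ • fun i => P i j, ⟨fun i => ⟨?_, ?_⟩, ?_⟩, ?_⟩
  · exact mul_nonneg (inv_nonneg.2 hq.le) (hP.1 i j)
  · rw [Pi.smul_apply, smul_eq_mul, inv_mul_le_iff₀ hq, mul_comm]
    exact (satisfiesPML_iff hp hP.1).1 hpml i j
  · simp only [Pi.smul_apply, smul_eq_mul, mul_left_comm _ (outDist p P j)⁻¹, ← mul_sum]
    exact inv_mul_cancel₀ hq.ne'
  · rw [smul_inv_smul₀ hq.ne']

theorem isMechanism_satisfiesPML_utility_of_columns (hp : ∀ i, 0 < p i) {μ : (Fin N → ℝ) → ℝ} (hμ : Sublinear μ)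
    {c : Fin M → ℝ} {x : Fin M → Fin N → ℝ} (hc : ∀ j, 0 ≤ c j)
    (hx : ∀ j, x j ∈ liftPolytope N p ε) (hsum : ∑ j, c j • x j = 1) :
    IsMechanism (Matrix.of fun i j => c j * x j i) ∧
      SatisfiesPML p ε (Matrix.of fun i j => c j * x j i) ∧
      utility μ (Matrix.of fun i j => c j * x j i) = ∑ j, c j * μ (x j) := by
  have hout : ∀ j, outDist p (Matrix.of fun i j => c j * x j i) j = c j := fun j => by
    simp only [outDist, Matrix.of_apply, mul_left_comm _ (c j), ← mul_sum, (hx j).2, mul_one]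
  have hmech : IsMechanism (Matrix.of fun i j => c j * x j i) :=
    ⟨fun i j => mul_nonneg (hc j) ((hx j).1 i).1, fun i => by simpa using congrFun hsum i⟩
  refine ⟨hmech, (satisfiesPML_iff hp hmech.1).2 fun i j => ?_, ?_⟩
  · rw [hout, Matrix.of_apply, mul_comm (exp ε)]
    exact mul_le_mul_of_nonneg_left ((hx j).1 i).2 (hc j)
  · exact sum_congr rfl fun j _ => hμ.2.1 (c j) (hc j) (x j) fun i => ((hx j).1 i).1

end Mechanism

section LinearProgram

variable {N : ℕ} {p : Fin N → ℝ} {ε : ℝ} {μ : (Fin N → ℝ) → ℝ}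

theorem exists_conicWeights_utility_le {M : ℕ} (hp : ∀ i, 0 < p i) (hpsum : ∑ i, p i = 1)
    (hε : 0 ≤ ε) (hμ : Sublinear μ) {S : Finset (Fin N → ℝ)}
    (hS : convexHull ℝ (S : Set (Fin N → ℝ)) = liftPolytope N p ε)
    {P : Matrix (Fin N) (Fin M) ℝ} (hP : IsMechanism P) (hpml : SatisfiesPML p ε P) :
    ∃ w ∈ conicWeights S 1, utility μ P ≤ ∑ y ∈ S, w y * μ y := by
  choose x hxV hcol using exists_column_eq_smul hp hpsum hε hP hpml
  choose a ha using fun j => exists_mem_conicWeights_of_mem_convexHull (hS ▸ hxV j)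
  set q := outDist p P
  have hq : ∀ j, 0 ≤ q j := outDist_nonneg hp hP.1
  have hx : ∀ j, x j = ∑ y ∈ S, a j y • y := fun j => (ha j).2.2.symm
  have hS0 : ∀ y ∈ S, 0 ≤ y := fun y hy i =>
    ((hS ▸ subset_convexHull ℝ _ (mem_coe.2 hy) : y ∈ liftPolytope N p ε).1 i).1
  refine ⟨∑ j, q j • a j, ⟨fun y => ?_, fun y hy => ?_, ?_⟩, ?_⟩
  · simpa [Finset.sum_apply] using sum_nonneg fun j _ => mul_nonneg (hq j) ((ha j).1 y)
  · simp [Finset.sum_apply, (ha _).2.1 y hy]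
  · calc ∑ y ∈ S, (∑ j, q j • a j) y • y = ∑ j, q j • x j := by
          simp only [hx, Finset.sum_apply, Pi.smul_apply, smul_eq_mul, sum_smul, smul_sum, mul_smul]
          exact sum_comm
      _ = ∑ j, fun i => P i j := by simp only [hcol]
      _ = 1 := funext fun i => by simp [Finset.sum_apply, hP.2 i]
  · calc utility μ P = ∑ j, q j * μ (x j) := sum_congr rfl fun j _ => by
          rw [hcol j, hμ.2.1 _ (hq j) _ fun i => ((hxV j).1 i).1]
      _ ≤ ∑ j, q j * ∑ y ∈ S, a j y * μ y := by
          refine sum_le_sum fun j _ => mul_le_mul_of_nonneg_left ?_ (hq j)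
          rw [hx j]
          exact hμ.map_sum_smul_le S (fun y _ => (ha j).1 y) hS0
      _ = ∑ y ∈ S, (∑ j, q j • a j) y * μ y := by
          simp only [Finset.sum_apply, Pi.smul_apply, smul_eq_mul, mul_sum, sum_mul, mul_assoc]
          exact sum_comm

theorem exists_mechanism_of_card_le (hp : ∀ i, 0 < p i) (hpsum : ∑ i, p i = 1) (hε : 0 ≤ ε)
    (hμ : Sublinear μ) {T : Finset (Fin N → ℝ)} (hT : ↑T ⊆ liftPolytope N p ε)
    (hcard : T.card ≤ N) {w : (Fin N → ℝ) → ℝ} (hw : w ∈ conicWeights T 1) :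
    ∃ P : Matrix (Fin N) (Fin N) ℝ, IsMechanism P ∧ SatisfiesPML p ε P ∧
      utility μ P = ∑ y ∈ T, w y * μ y := by
  obtain ⟨e⟩ : Nonempty (T ↪ Fin N) := Embedding.nonempty_of_card_le (by simpa using hcard)
  -- outside the range of `e` the column is the zero column `0 • 1`
  set c : Fin N → ℝ := extend e (fun y => w y) 0
  set x : Fin N → Fin N → ℝ := extend e (fun y => (y : Fin N → ℝ)) 1
  have hsum : ∀ {A : Type} [AddCommMonoid A] [Module ℝ A] (g : (Fin N → ℝ) → A),
      ∑ j, c j • g (x j) = ∑ y ∈ T, w y • g y := by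
    intro A _ _ g
    rw [← sum_coe_sort T]
    refine (Fintype.sum_of_injective e e.injective _ _ (fun j hj => ?_) fun y => ?_).symm
    · simp [c, extend_apply' _ _ _ hj]
    · simp [c, x, e.injective.extend_apply]
  have hcol : ∀ j, 0 ≤ c j ∧ x j ∈ liftPolytope N p ε := by
    intro j
    by_cases hj : ∃ y, e y = j
    · obtain ⟨y, rfl⟩ := hj
      simpa [c, x, e.injective.extend_apply, hw.1 y] using hT y.2
    · simpa [c, x, extend_apply' _ _ _ hj] using one_mem_liftPolytope hpsum hε
  obtain ⟨hPm, hPp, hPu⟩ := isMechanism_satisfiesPML_utility_of_columns hp hμ (fun j => (hcol j).1)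
    (fun j => (hcol j).2) ((hsum id).trans hw.2.2)
  exact ⟨_, hPm, hPp, hPu.trans (by simpa using hsum μ)⟩

theorem exists_mechanism_sum_le_utility (hp : ∀ i, 0 < p i) (hpsum : ∑ i, p i = 1)
    (hε : 0 ≤ ε) (hμ : Sublinear μ) {S : Finset (Fin N → ℝ)} (hS : ↑S ⊆ liftPolytope N p ε)
    {w : (Fin N → ℝ) → ℝ} (hw : w ∈ conicWeights S 1) :
    ∃ P : Matrix (Fin N) (Fin N) ℝ, IsMechanism P ∧ SatisfiesPML p ε P ∧
      ∑ y ∈ S, w y * μ y ≤ utility μ P := by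
  obtain ⟨T, hTS, hT, w', hw', hle⟩ := exists_conicWeights_card_le_finrank
    (dotProductBilin ℝ ℝ p) μ S (fun y hy => one_pos.trans_eq (hS hy).2.symm) hw
  rw [Module.finrank_fin_fun] at hT
  obtain ⟨P, hPm, hPp, hPu⟩ :=
    exists_mechanism_of_card_le hp hpsum hε hμ ((coe_subset.2 hTS).trans hS) hT hw'
  exact ⟨P, hPm, hPp, hPu ▸ hle⟩

theorem setOf_finsum_eq_image_conicWeights (hpsum : ∑ i, p i = 1) {S : Finset (Fin N → ℝ)}
    (hS : ↑S = (liftPolytope N p ε).extremePoints ℝ) :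
    {u : ℝ | ∃ w : (Fin N → ℝ) → ℝ,
        (∀ lam, 0 ≤ w lam) ∧
        (∀ lam, lam ∉ (liftPolytope N p ε).extremePoints ℝ → w lam = 0) ∧
        (∑ᶠ lam, w lam) = 1 ∧
        (∀ i, (∑ᶠ lam, w lam * lam i) = 1) ∧
        u = ∑ᶠ lam, w lam * μ lam} =
      (fun w => ∑ y ∈ S, w y * μ y) '' conicWeights S 1 := by
  have hfin : ∀ w : (Fin N → ℝ) → ℝ, (∀ y ∉ S, w y = 0) → ∀ g : (Fin N → ℝ) → ℝ,
      ∑ᶠ y, w y * g y = ∑ y ∈ S, w y * g y := fun w hw g =>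
    finsum_eq_sum_of_support_subset _
      ((support_mul_subset_left _ _).trans (support_subset_iff'.2 hw))
  ext u
  simp only [Set.mem_ofPred_eq, Set.mem_image, ← hS, mem_coe]
  constructor
  · rintro ⟨w, hw0, hwS, -, hw1, rfl⟩
    refine ⟨w, ⟨hw0, hwS, funext fun i => ?_⟩, (hfin w hwS μ).symm⟩
    simpa [Finset.sum_apply, hfin w hwS] using hw1 i
  · rintro ⟨w, hw, rfl⟩
    refine ⟨w, hw.1, hw.2.1, ?_, fun i => ?_, (hfin w hw.2.1 μ).symm⟩
    · rw [finsum_eq_sum_of_support_subset w (support_subset_iff'.2 hw.2.1),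
        sum_eq_of_mem_conicWeights (dotProductBilin ℝ ℝ p)
          (fun y hy => (extremePoints_subset (hS ▸ mem_coe.2 hy)).2) hw]
      simpa [dotProduct] using hpsum
    · rw [hfin w hw.2.1 (· i)]
      simpa [Finset.sum_apply] using congrFun hw.2.2 i

end LinearProgram

theorem linear_program_lifts_general (N : ℕ) (p : Fin N → ℝ)
    (hp : ∀ i, 0 < p i) (hpsum : ∑ i, p i = 1)
    (ε : ℝ) (hε : 0 ≤ ε)
    (μ : (Fin N → ℝ) → ℝ) (hμ : Sublinear μ) :
    IsGreatest
      {u : ℝ | ∃ w : (Fin N → ℝ) → ℝ,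
        (∀ lam, 0 ≤ w lam) ∧
        (∀ lam, lam ∉ (liftPolytope N p ε).extremePoints ℝ → w lam = 0) ∧
        (∑ᶠ lam, w lam) = 1 ∧
        (∀ i, (∑ᶠ lam, w lam * lam i) = 1) ∧
        u = ∑ᶠ lam, w lam * μ lam}
      (sSup {u : ℝ | ∃ P : Matrix (Fin N) (Fin N) ℝ,
        IsMechanism P ∧ SatisfiesPML p ε P ∧ u = utility μ P}) := by
  obtain ⟨S, hS⟩ := (finite_extremePoints_liftPolytope (ε := ε) hp).exists_finset_coe
  have hSV : ↑S ⊆ liftPolytope N p ε := hS ▸ extremePoints_subset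
  have hhull : convexHull ℝ (S : Set (Fin N → ℝ)) = liftPolytope N p ε :=
    hS ▸ convexHull_extremePoints_liftPolytope hp
  rw [setOf_finsum_eq_image_conicWeights hpsum hS]
  obtain ⟨u, hu⟩ := exists_isGreatest_image_conicWeights (dotProductBilin ℝ ℝ p)
    (fun y hy => (hSV hy).2) μ
    (exists_mem_conicWeights_of_mem_convexHull (hhull ▸ one_mem_liftPolytope hpsum hε))
  rw [(hu.of_forall_exists_le ?_ ?_).csSup_eq]
  · exact hu
  · rintro _ ⟨P, hPm, hPp, rfl⟩
    obtain ⟨w, hw, hle⟩ := exists_conicWeights_utility_le hp hpsum hε hμ hhull hPm hPp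
    exact ⟨_, ⟨w, hw, rfl⟩, hle⟩
  · rintro _ ⟨w, hw, rfl⟩
    obtain ⟨P, hPm, hPp, hle⟩ := exists_mechanism_sum_le_utility hp hpsum hε hμ hSV hw
    exact ⟨_, ⟨P, hPm, hPp, rfl⟩, hle⟩

/-- **Linear program over extremal lift vectors.** The supremum
of a permutation-symmetric sub-convex utility over `M_N(ε)` equals the
maximum, over weight assignments `w` supported on the extreme points of the
lift polytope with `∑ w(λ) = 1` and `∑ w(λ)·λ_i = 1` for every `i`, of the
linear objective `∑ w(λ)·μ(λ)`. -/
theorem linear_program_lifts (N : ℕ) (hN : 1 ≤ N) (p : Fin N → ℝ)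
    (hp : ∀ i, 0 < p i) (hpsum : ∑ i, p i = 1)
    (ε : ℝ) (hε : 0 ≤ ε)
    (μ : (Fin N → ℝ) → ℝ) (hμ : Sublinear μ) (hsym : PermSymmetric μ) :
    IsGreatest
      {u : ℝ | ∃ w : (Fin N → ℝ) → ℝ,
        (∀ lam, 0 ≤ w lam) ∧
        (∀ lam, lam ∉ (liftPolytope N p ε).extremePoints ℝ → w lam = 0) ∧
        (∑ᶠ lam, w lam) = 1 ∧
        (∀ i, (∑ᶠ lam, w lam * lam i) = 1) ∧
        u = ∑ᶠ lam, w lam * μ lam}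
      (sSup {u : ℝ | ∃ P : Matrix (Fin N) (Fin N) ℝ,
        IsMechanism P ∧ SatisfiesPML p ε P ∧ u = utility μ P}) :=
  linear_program_lifts_general N p hp hpsum ε hε μ hμ
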